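/- arXiv:2206.11420 — 6 statements merged into one kernel-verified Lean document; each statement's English description precedes it below -/
import Mathlib

section
/- Let O, M, Y be nonempty finite types and p a pmf on O × M × Y. Let q : O → M → (Y → ℝ) be a family of variational decoders such that for every (o,m) the function q o m is a pmf on Y, and q o m y > 0 whenever p(o,m,y) > 0. Then the conditional mutual information satisfies I(Y;M|O) ≥ ∑_{(o,m,y) : p(o,m,y) > 0} p(o,m,y) · log(q o m y) + H(Y|O); that is, the expected log-likelihood of the variational decoder plus the conditional entropy H(Y|O) is a lower bound on the conditional mutual information (the paper's Lemma 1, the variational lower bound used to train the assistive-information encoder). -/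
/-- **Lemma 1 (paper's variational lower bound).**
For a pmf `p` on `O × M × Y` and a family of variational decoders `q o m` (each a pmf on `Y`,
positive wherever `p` is positive), the conditional mutual information `I(Y;M|O)` is bounded
below by the expected log-likelihood of the decoder plus the conditional entropy `H(Y|O)`.
Marginals: `p_O o = ∑ m' y', p (o,m',y')`, `p_OM o m = ∑ y', p (o,m,y')`,
`p_OY o y = ∑ m', p (o,m',y)`. -/
theorem variational_lower_bound_conditional_mutual_information
    {O M Y : Type*} [Fintype O] [Fintype M] [Fintype Y]
    [Nonempty O] [Nonempty M] [Nonempty Y]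
    (p : O × M × Y → ℝ)
    (hp0 : ∀ x, 0 ≤ p x) (hp1 : ∑ x : O × M × Y, p x = 1)
    (q : O → M → Y → ℝ)
    (hq0 : ∀ o m y, 0 ≤ q o m y)
    (hq1 : ∀ o m, ∑ y : Y, q o m y = 1)
    (hqpos : ∀ o m y, 0 < p (o, m, y) → 0 < q o m y) :
    (∑ o : O, ∑ m : M, ∑ y : Y,
        if 0 < p (o, m, y) then p (o, m, y) * Real.log (q o m y) else 0)
      + (-(∑ o : O, ∑ m : M, ∑ y : Y,
            if 0 < p (o, m, y) then
              p (o, m, y) *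
                Real.log ((∑ m' : M, p (o, m', y)) / (∑ m' : M, ∑ y' : Y, p (o, m', y')))
            else 0))
      ≤ ∑ o : O, ∑ m : M, ∑ y : Y,
          if 0 < p (o, m, y) then
            p (o, m, y) *
              Real.log (p (o, m, y) * (∑ m' : M, ∑ y' : Y, p (o, m', y')) /
                ((∑ y' : Y, p (o, m, y')) * (∑ m' : M, p (o, m', y))))
          else 0 := by
  classical
  -- positivity of marginals where p is positive
  have hOM : ∀ o m y, 0 < p (o, m, y) → 0 < ∑ y' : Y, p (o, m, y') := by
    intro o m y h
    exact Finset.sum_pos' (fun _ _ => hp0 _) ⟨y, Finset.mem_univ y, h⟩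
  have hOY : ∀ o m y, 0 < p (o, m, y) → 0 < ∑ m' : M, p (o, m', y) := by
    intro o m y h
    exact Finset.sum_pos' (fun _ _ => hp0 _) ⟨m, Finset.mem_univ m, h⟩
  have hO : ∀ o m y, 0 < p (o, m, y) → 0 < ∑ m' : M, ∑ y' : Y, p (o, m', y') := by
    intro o m y h
    exact Finset.sum_pos' (fun _ _ => Finset.sum_nonneg fun _ _ => hp0 _)
      ⟨m, Finset.mem_univ m, hOM o m y h⟩
  -- pointwise inequality
  have hpoint : ∀ o m y,
      (if 0 < p (o, m, y) then p (o, m, y) - (∑ y' : Y, p (o, m, y')) * q o m y else 0)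
      ≤ (if 0 < p (o, m, y) then
            p (o, m, y) *
              Real.log (p (o, m, y) * (∑ m' : M, ∑ y' : Y, p (o, m', y')) /
                ((∑ y' : Y, p (o, m, y')) * (∑ m' : M, p (o, m', y))))
          else 0)
        - (if 0 < p (o, m, y) then p (o, m, y) * Real.log (q o m y) else 0)
        + (if 0 < p (o, m, y) then
            p (o, m, y) *
              Real.log ((∑ m' : M, p (o, m', y)) / (∑ m' : M, ∑ y' : Y, p (o, m', y')))
          else 0) := by
    intro o m y
    by_cases h : 0 < p (o, m, y)
    · simp only [if_pos h]
      have hq := hqpos o m y h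
      have h1 := hOM o m y h
      have h2 := hOY o m y h
      have h3 := hO o m y h
      have hlog : Real.log (p (o, m, y) * (∑ m' : M, ∑ y' : Y, p (o, m', y')) /
                ((∑ y' : Y, p (o, m, y')) * (∑ m' : M, p (o, m', y))))
          - Real.log (q o m y)
          + Real.log ((∑ m' : M, p (o, m', y)) / (∑ m' : M, ∑ y' : Y, p (o, m', y')))
          = Real.log (p (o, m, y) / ((∑ y' : Y, p (o, m, y')) * q o m y)) := by
        rw [Real.log_div (by positivity) (by positivity),
            Real.log_div (by positivity) (by positivity),
            Real.log_div (by positivity) (by positivity),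
            Real.log_mul (by positivity) (by positivity),
            Real.log_mul (by positivity) (by positivity),
            Real.log_mul (by positivity) (by positivity)]
        ring
      have hkey : Real.log ((∑ y' : Y, p (o, m, y')) * q o m y / p (o, m, y))
          ≤ (∑ y' : Y, p (o, m, y')) * q o m y / p (o, m, y) - 1 :=
        Real.log_le_sub_one_of_pos (by positivity)
      have hlogdiv : Real.log (p (o, m, y) / ((∑ y' : Y, p (o, m, y')) * q o m y))
          = - Real.log ((∑ y' : Y, p (o, m, y')) * q o m y / p (o, m, y)) := by
        rw [← Real.log_inv]
        congr 1
        field_simp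
      have hge : p (o, m, y) - (∑ y' : Y, p (o, m, y')) * q o m y
          ≤ p (o, m, y) * Real.log (p (o, m, y) / ((∑ y' : Y, p (o, m, y')) * q o m y)) := by
        rw [hlogdiv]
        have := mul_le_mul_of_nonneg_left hkey (le_of_lt h)
        have heq : p (o, m, y) * ((∑ y' : Y, p (o, m, y')) * q o m y / p (o, m, y) - 1)
            = (∑ y' : Y, p (o, m, y')) * q o m y - p (o, m, y) := by
          field_simp
        nlinarith [this, heq]
      calc p (o, m, y) - (∑ y' : Y, p (o, m, y')) * q o m y
          ≤ p (o, m, y) * Real.log (p (o, m, y) / ((∑ y' : Y, p (o, m, y')) * q o m y)) := hge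
        _ = _ := by rw [← hlog]; ring
    · simp [h]
  -- sum the pointwise inequality
  have hsum1 : ∑ o : O, ∑ m : M, ∑ y : Y,
      (if 0 < p (o, m, y) then p (o, m, y) - (∑ y' : Y, p (o, m, y')) * q o m y else 0)
      ≤ ∑ o : O, ∑ m : M, ∑ y : Y,
        ((if 0 < p (o, m, y) then
            p (o, m, y) *
              Real.log (p (o, m, y) * (∑ m' : M, ∑ y' : Y, p (o, m', y')) /
                ((∑ y' : Y, p (o, m, y')) * (∑ m' : M, p (o, m', y))))
          else 0)
        - (if 0 < p (o, m, y) then p (o, m, y) * Real.log (q o m y) else 0)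
        + (if 0 < p (o, m, y) then
            p (o, m, y) *
              Real.log ((∑ m' : M, p (o, m', y)) / (∑ m' : M, ∑ y' : Y, p (o, m', y')))
          else 0)) := by
    refine Finset.sum_le_sum fun o _ => Finset.sum_le_sum fun m _ => Finset.sum_le_sum fun y _ => ?_
    exact hpoint o m y
  -- the lower-bound sum is nonnegative
  have hA : ∑ o : O, ∑ m : M, ∑ y : Y,
      (if 0 < p (o, m, y) then p (o, m, y) else 0) = 1 := by
    have : ∀ x : O × M × Y, (if 0 < p x then p x else 0) = p x := by
      intro x
      split_ifs with h
      · rfl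
      · exact (le_antisymm (not_lt.mp h) (hp0 x)).symm
    calc ∑ o : O, ∑ m : M, ∑ y : Y, (if 0 < p (o, m, y) then p (o, m, y) else 0)
        = ∑ o : O, ∑ m : M, ∑ y : Y, p (o, m, y) := by
          refine Finset.sum_congr rfl fun o _ => Finset.sum_congr rfl fun m _ =>
            Finset.sum_congr rfl fun y _ => this (o, m, y)
      _ = 1 := by rw [← hp1]; simp [Fintype.sum_prod_type]
  have hB : ∑ o : O, ∑ m : M, ∑ y : Y,
      (if 0 < p (o, m, y) then (∑ y' : Y, p (o, m, y')) * q o m y else 0) ≤ 1 := by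
    calc ∑ o : O, ∑ m : M, ∑ y : Y,
          (if 0 < p (o, m, y) then (∑ y' : Y, p (o, m, y')) * q o m y else 0)
        ≤ ∑ o : O, ∑ m : M, ∑ y : Y, (∑ y' : Y, p (o, m, y')) * q o m y := by
          refine Finset.sum_le_sum fun o _ => Finset.sum_le_sum fun m _ =>
            Finset.sum_le_sum fun y _ => ?_
          split_ifs with h
          · exact le_rfl
          · exact mul_nonneg (Finset.sum_nonneg fun _ _ => hp0 _) (hq0 o m y)
      _ = ∑ o : O, ∑ m : M, (∑ y' : Y, p (o, m, y')) := by
          refine Finset.sum_congr rfl fun o _ => Finset.sum_congr rfl fun m _ => ?_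
          rw [← Finset.mul_sum, hq1, mul_one]
      _ = 1 := by rw [← hp1]; simp [Fintype.sum_prod_type]
  have hnonneg : 0 ≤ ∑ o : O, ∑ m : M, ∑ y : Y,
      (if 0 < p (o, m, y) then p (o, m, y) - (∑ y' : Y, p (o, m, y')) * q o m y else 0) := by
    have hsplit : ∑ o : O, ∑ m : M, ∑ y : Y,
        (if 0 < p (o, m, y) then p (o, m, y) - (∑ y' : Y, p (o, m, y')) * q o m y else 0)
        = (∑ o : O, ∑ m : M, ∑ y : Y, (if 0 < p (o, m, y) then p (o, m, y) else 0))
          - (∑ o : O, ∑ m : M, ∑ y : Y,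
              (if 0 < p (o, m, y) then (∑ y' : Y, p (o, m, y')) * q o m y else 0)) := by
      simp only [← Finset.sum_sub_distrib]
      refine Finset.sum_congr rfl fun o _ => Finset.sum_congr rfl fun m _ =>
        Finset.sum_congr rfl fun y _ => ?_
      split_ifs with h <;> ring
    rw [hsplit, hA]
    linarith
  have hsplit2 : ∑ o : O, ∑ m : M, ∑ y : Y,
        ((if 0 < p (o, m, y) then
            p (o, m, y) *
              Real.log (p (o, m, y) * (∑ m' : M, ∑ y' : Y, p (o, m', y')) /
                ((∑ y' : Y, p (o, m, y')) * (∑ m' : M, p (o, m', y))))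
          else 0)
        - (if 0 < p (o, m, y) then p (o, m, y) * Real.log (q o m y) else 0)
        + (if 0 < p (o, m, y) then
            p (o, m, y) *
              Real.log ((∑ m' : M, p (o, m', y)) / (∑ m' : M, ∑ y' : Y, p (o, m', y')))
          else 0))
      = (∑ o : O, ∑ m : M, ∑ y : Y,
          if 0 < p (o, m, y) then
            p (o, m, y) *
              Real.log (p (o, m, y) * (∑ m' : M, ∑ y' : Y, p (o, m', y')) /
                ((∑ y' : Y, p (o, m, y')) * (∑ m' : M, p (o, m', y))))
          else 0)
        - (∑ o : O, ∑ m : M, ∑ y : Y,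
            if 0 < p (o, m, y) then p (o, m, y) * Real.log (q o m y) else 0)
        + (∑ o : O, ∑ m : M, ∑ y : Y,
            if 0 < p (o, m, y) then
              p (o, m, y) *
                Real.log ((∑ m' : M, p (o, m', y)) / (∑ m' : M, ∑ y' : Y, p (o, m', y')))
            else 0) := by
    simp only [Finset.sum_add_distrib, Finset.sum_sub_distrib]
  rw [hsplit2] at hsum1
  linarith
end

section
/- Let Z, Y be nonempty finite types, p a pmf on Z × Y, and q : Z → (Y → ℝ) a family such that each q z is a pmf on Y and q z y > 0 whenever p(z,y) > 0. Then the mutual information satisfies I(Z;Y) ≥ ∑_{(z,y) : p(z,y) > 0} p(z,y) · log(q z y) + H(Y), where p_Y is the marginal of p on Y; i.e., the expected log-likelihood of any variational decoder plus the entropy of Y lower-bounds the mutual information (the unconditional form of the paper's Lemma 1). -/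
/-!
Writing `r(z, y) = p_Z(z) · q z y`, the support-wise identity
`log (p / (p_Z p_Y)) = log (p / r) + log q - log p_Y` splits the mutual information into
`D(p ‖ r) + 𝔼 log q + H(Y)`. The weight `r` has the same total mass as `p` because each `q z`
sums to one, so Gibbs' inequality `D(p ‖ r) ≥ 0` gives the bound.
-/

open Finset Real

lemma ite_pos_mul_eq_mul {x : ℝ} (hx : 0 ≤ x) (t : ℝ) :
    (if 0 < x then x * t else 0) = x * t := by
  rcases hx.lt_or_eq with hx | rfl
  · rw [if_pos hx]
  · simp

lemma sub_le_mul_log_div {a b : ℝ} (ha : 0 ≤ a) (hb : 0 ≤ b) (hab : 0 < a → 0 < b) :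
    a - b ≤ a * log (a / b) := by
  rcases ha.lt_or_eq with ha | rfl
  · have hlog := mul_le_mul_of_nonneg_left (log_le_sub_one_of_pos (div_pos (hab ha) ha)) ha.le
    rw [mul_sub, mul_div_cancel₀ _ ha.ne', mul_one, ← neg_neg (log (b / a)), ← log_inv,
      inv_div] at hlog
    linarith
  · simpa using hb

theorem sum_mul_log_div_nonneg {ι : Type*} (s : Finset ι) {p r : ι → ℝ}
    (hp : ∀ i ∈ s, 0 ≤ p i) (hr : ∀ i ∈ s, 0 ≤ r i) (hpr : ∀ i ∈ s, 0 < p i → 0 < r i)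
    (hsum : ∑ i ∈ s, r i ≤ ∑ i ∈ s, p i) :
    0 ≤ ∑ i ∈ s, p i * log (p i / r i) :=
  calc 0 ≤ ∑ i ∈ s, (p i - r i) := by rw [sum_sub_distrib]; linarith
    _ ≤ _ := sum_le_sum fun i hi => sub_le_mul_log_div (hp i hi) (hr i hi) (hpr i hi)

lemma log_div_mul_eq {a b c d : ℝ} (ha : a ≠ 0) (hb : b ≠ 0) (hc : c ≠ 0) (hd : d ≠ 0) :
    log (a / (b * c)) = log (a / (b * d)) + log d - log c := by
  rw [log_div ha (mul_ne_zero hb hc), log_div ha (mul_ne_zero hb hd), log_mul hb hc,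
    log_mul hb hd]
  ring

lemma sum_mul_log_div_marginal_mul_nonneg {Z Y : Type*} [Fintype Z] [Fintype Y]
    {p : Z × Y → ℝ} {q : Z → Y → ℝ} (hp0 : ∀ x, 0 ≤ p x) (hq0 : ∀ z y, 0 ≤ q z y)
    (hq1 : ∀ z, ∑ y, q z y = 1) (hqpos : ∀ z y, 0 < p (z, y) → 0 < q z y) :
    0 ≤ ∑ z, ∑ y, p (z, y) * log (p (z, y) / ((∑ y', p (z, y')) * q z y)) := by
  rw [← Fintype.sum_prod_type']
  refine sum_mul_log_div_nonneg _ (fun x _ => hp0 x)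
    (fun x _ => mul_nonneg (sum_nonneg fun _ _ => hp0 _) (hq0 _ _))
    (fun x _ h => mul_pos (sum_pos' (fun _ _ => hp0 _) ⟨x.2, mem_univ _, h⟩) (hqpos _ _ h))
    (le_of_eq ?_)
  simp only [Fintype.sum_prod_type, ← mul_sum, hq1, mul_one]

theorem variational_lower_bound_mutual_information_general
    {Z Y : Type*} [Fintype Z] [Fintype Y]
    (p : Z × Y → ℝ)
    (hp0 : ∀ x, 0 ≤ p x)
    (q : Z → Y → ℝ)
    (hq0 : ∀ z y, 0 ≤ q z y)
    (hq1 : ∀ z, ∑ y : Y, q z y = 1)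
    (hqpos : ∀ z y, 0 < p (z, y) → 0 < q z y) :
    (∑ z : Z, ∑ y : Y, if 0 < p (z, y) then p (z, y) * Real.log (q z y) else 0)
      + (-(∑ y : Y,
            if 0 < (∑ z' : Z, p (z', y)) then
              (∑ z' : Z, p (z', y)) * Real.log (∑ z' : Z, p (z', y))
            else 0))
      ≤ ∑ z : Z, ∑ y : Y,
          if 0 < p (z, y) then
            p (z, y) *
              Real.log (p (z, y) / ((∑ y' : Y, p (z, y')) * (∑ z' : Z, p (z', y))))
          else 0 := by
  set pZ : Z → ℝ := fun z => ∑ y, p (z, y)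
  set pY : Y → ℝ := fun y => ∑ z, p (z, y)
  simp only [ite_pos_mul_eq_mul (hp0 _), ite_pos_mul_eq_mul (sum_nonneg fun _ _ => hp0 _)]
  have entropy : ∑ y, pY y * log (pY y) = ∑ z, ∑ y, p (z, y) * log (pY y) := by
    simp_rw [pY, sum_mul]
    exact sum_comm
  have pointwise : ∀ z y, p (z, y) * log (p (z, y) / (pZ z * pY y)) =
      p (z, y) * log (p (z, y) / (pZ z * q z y)) + p (z, y) * log (q z y)
        - p (z, y) * log (pY y) := by
    intro z y
    rcases (hp0 (z, y)).lt_or_eq with h | h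
    · have hpZ : 0 < pZ z := sum_pos' (fun _ _ => hp0 _) ⟨y, mem_univ _, h⟩
      have hpY : 0 < pY y := sum_pos' (fun _ _ => hp0 _) ⟨z, mem_univ _, h⟩
      rw [log_div_mul_eq h.ne' hpZ.ne' hpY.ne' (hqpos z y h).ne']
      ring
    · simp [← h]
  have decomposition : ∑ z, ∑ y, p (z, y) * log (p (z, y) / (pZ z * pY y)) =
      ∑ z, ∑ y, p (z, y) * log (p (z, y) / (pZ z * q z y)) + ∑ z, ∑ y, p (z, y) * log (q z y)
        - ∑ z, ∑ y, p (z, y) * log (pY y) := by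
    simp_rw [pointwise, sum_sub_distrib, sum_add_distrib]
  have gibbs : 0 ≤ ∑ z, ∑ y, p (z, y) * log (p (z, y) / (pZ z * q z y)) :=
    sum_mul_log_div_marginal_mul_nonneg hp0 hq0 hq1 hqpos
  rw [entropy]
  refine le_of_le_of_eq ?_ decomposition.symm
  linarith

/-- **Unconditional form of the paper's Lemma 1.**
For a pmf `p` on `Z × Y` and a family of variational decoders `q z` (each a pmf on `Y`,
positive wherever `p` is positive), the mutual information `I(Z;Y)` is bounded below by
the expected log-likelihood of the decoder plus the entropy `H(Y)` of the `Y`-marginal.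
Marginals: `p_Z z = ∑ y', p (z,y')`, `p_Y y = ∑ z', p (z',y)`. -/
theorem variational_lower_bound_mutual_information
    {Z Y : Type*} [Fintype Z] [Fintype Y] [Nonempty Z] [Nonempty Y]
    (p : Z × Y → ℝ)
    (hp0 : ∀ x, 0 ≤ p x) (hp1 : ∑ x : Z × Y, p x = 1)
    (q : Z → Y → ℝ)
    (hq0 : ∀ z y, 0 ≤ q z y)
    (hq1 : ∀ z, ∑ y : Y, q z y = 1)
    (hqpos : ∀ z y, 0 < p (z, y) → 0 < q z y) :
    (∑ z : Z, ∑ y : Y, if 0 < p (z, y) then p (z, y) * Real.log (q z y) else 0)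
      + (-(∑ y : Y,
            if 0 < (∑ z' : Z, p (z', y)) then
              (∑ z' : Z, p (z', y)) * Real.log (∑ z' : Z, p (z', y))
            else 0))
      ≤ ∑ z : Z, ∑ y : Y,
          if 0 < p (z, y) then
            p (z, y) *
              Real.log (p (z, y) / ((∑ y' : Y, p (z, y')) * (∑ z' : Z, p (z', y))))
          else 0 :=
  variational_lower_bound_mutual_information_general p hp0 q hq0 hq1 hqpos
end

section
/- Let O, M, Y be nonempty finite types, p a pmf on O × M × Y, and β ≥ 0 a real number. Let q_ψ : O → M → (Y → ℝ) be a family with each q_ψ o m a pmf on Y satisfying q_ψ o m y > 0 whenever p(o,m,y) > 0, and let q_φ be a pmf on M with q_φ(m) > 0 whenever the marginal p_M(m) > 0. Then the information-bottleneck objective satisfies I(Y;M|O) − β · I(O;M) ≥ ( ∑_{(o,m,y) : p(o,m,y) > 0} p(o,m,y) · log(q_ψ o m y) + H(Y|O) ) − β · ∑_{o : p_O(o) > 0} p_O(o) · KL( p_{M|o} ‖ q_φ ), where I(O;M) is the mutual information of the (O,M)-marginal of p and p_{M|o} is the conditional pmf m ↦ p_{OM}(o,m)/p_O(o); i.e.,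 the negative of the variational information-bottleneck loss L_IB (up to the constant H(Y|O)) is an evidence lower bound on the objective J_IB. -/
/-- Gibbs' inequality / nonnegativity of a generalized KL divergence. -/
lemma gibbs_aux {ι : Type*} [Fintype ι] (r q : ι → ℝ)
    (hr : ∀ i, 0 ≤ r i) (hq : ∀ i, 0 ≤ q i)
    (hpos : ∀ i, 0 < r i → 0 < q i)
    (hsum : ∑ i, q i ≤ ∑ i, r i) :
    0 ≤ ∑ i, (if 0 < r i then r i * Real.log (r i / q i) else 0) := by
  have h1 : ∀ i ∈ (Finset.univ : Finset ι),
      r i - q i ≤ (if 0 < r i then r i * Real.log (r i / q i) else 0) := by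
    intro i _
    by_cases h : 0 < r i
    · rw [if_pos h]
      have hqi := hpos i h
      have h2 := Real.log_le_sub_one_of_pos (div_pos hqi h)
      have h3 : Real.log (r i / q i) = - Real.log (q i / r i) := by
        rw [← Real.log_inv]; congr 1; rw [inv_div]
      have h4 : 1 - q i / r i ≤ Real.log (r i / q i) := by rw [h3]; linarith
      have h5 : r i * (1 - q i / r i) ≤ r i * Real.log (r i / q i) :=
        mul_le_mul_of_nonneg_left h4 h.le
      have h6 : r i * (1 - q i / r i) = r i - q i := by field_simp
      linarith
    · rw [if_neg h]
      have hz : r i = 0 := le_antisymm (not_lt.mp h) (hr i)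
      rw [hz]
      simpa using hq i
  have h2 := Finset.sum_le_sum h1
  rw [Finset.sum_sub_distrib] at h2
  linarith

/-- **Evidence lower bound on the information-bottleneck objective `J_IB`.**
For a pmf `p` on `O × M × Y`, `β ≥ 0`, a family of variational decoders `qψ o m` (pmfs on `Y`,
positive wherever `p` is positive), and a variational marginal `qφ` (a pmf on `M`, positive
wherever the true marginal `p_M` is positive), the objective
`I(Y;M|O) − β·I(O;M)` is bounded below by
`(∑ p log qψ + H(Y|O)) − β·∑_{o : p_O(o)>0} p_O(o)·KL(p_{M|o} ‖ qφ)`,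
where `I(O;M)` is the mutual information of the `(O,M)`-marginal of `p` and
`p_{M|o} : m ↦ p_OM(o,m)/p_O(o)`.
Marginals: `p_O o = ∑ m' y', p (o,m',y')`, `p_OM o m = ∑ y', p (o,m,y')`,
`p_OY o y = ∑ m', p (o,m',y)`, `p_M m = ∑ o' y', p (o',m,y')`. -/
theorem information_bottleneck_elbo
    {O M Y : Type*} [Fintype O] [Fintype M] [Fintype Y]
    [Nonempty O] [Nonempty M] [Nonempty Y]
    (p : O × M × Y → ℝ)
    (hp0 : ∀ x, 0 ≤ p x) (hp1 : ∑ x : O × M × Y, p x = 1)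
    (β : ℝ) (hβ : 0 ≤ β)
    (qψ : O → M → Y → ℝ)
    (hqψ0 : ∀ o m y, 0 ≤ qψ o m y)
    (hqψ1 : ∀ o m, ∑ y : Y, qψ o m y = 1)
    (hqψpos : ∀ o m y, 0 < p (o, m, y) → 0 < qψ o m y)
    (qφ : M → ℝ)
    (hqφ0 : ∀ m, 0 ≤ qφ m) (hqφ1 : ∑ m : M, qφ m = 1)
    (hqφpos : ∀ m, 0 < (∑ o' : O, ∑ y' : Y, p (o', m, y')) → 0 < qφ m) :
    (∑ o : O, ∑ m : M, ∑ y : Y,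
        if 0 < p (o, m, y) then
          p (o, m, y) *
            Real.log (p (o, m, y) * (∑ m' : M, ∑ y' : Y, p (o, m', y')) /
              ((∑ y' : Y, p (o, m, y')) * (∑ m' : M, p (o, m', y))))
        else 0)
      - β * (∑ o : O, ∑ m : M,
          if 0 < (∑ y' : Y, p (o, m, y')) then
            (∑ y' : Y, p (o, m, y')) *
              Real.log ((∑ y' : Y, p (o, m, y')) /
                ((∑ m' : M, ∑ y' : Y, p (o, m', y')) * (∑ o' : O, ∑ y' : Y, p (o', m, y'))))
          else 0)
    ≥ ((∑ o : O, ∑ m : M, ∑ y : Y,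
          if 0 < p (o, m, y) then p (o, m, y) * Real.log (qψ o m y) else 0)
        + (-(∑ o : O, ∑ m : M, ∑ y : Y,
              if 0 < p (o, m, y) then
                p (o, m, y) *
                  Real.log ((∑ m' : M, p (o, m', y)) / (∑ m' : M, ∑ y' : Y, p (o, m', y')))
              else 0)))
      - β * (∑ o : O,
          if 0 < (∑ m' : M, ∑ y' : Y, p (o, m', y')) then
            (∑ m' : M, ∑ y' : Y, p (o, m', y')) *
              (∑ m : M,
                if 0 < (∑ y' : Y, p (o, m, y')) / (∑ m' : M, ∑ y' : Y, p (o, m', y')) then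
                  ((∑ y' : Y, p (o, m, y')) / (∑ m' : M, ∑ y' : Y, p (o, m', y'))) *
                    Real.log (((∑ y' : Y, p (o, m, y')) /
                      (∑ m' : M, ∑ y' : Y, p (o, m', y'))) / qφ m)
                else 0)
          else 0) := by
  -- marginal nonnegativity
  have hOMnn : ∀ o m, (0:ℝ) ≤ ∑ y' : Y, p (o, m, y') :=
    fun o m => Finset.sum_nonneg (fun y _ => hp0 _)
  have hOnn : ∀ o, (0:ℝ) ≤ ∑ m' : M, ∑ y' : Y, p (o, m', y') :=
    fun o => Finset.sum_nonneg (fun m _ => hOMnn o m)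
  -- marginal positivity
  have hOMpos : ∀ o m y, 0 < p (o, m, y) → 0 < ∑ y' : Y, p (o, m, y') :=
    fun o m y h => Finset.sum_pos' (fun y' _ => hp0 _) ⟨y, Finset.mem_univ y, h⟩
  have hOYpos : ∀ o m y, 0 < p (o, m, y) → 0 < ∑ m' : M, p (o, m', y) :=
    fun o m y h => Finset.sum_pos' (fun m' _ => hp0 _) ⟨m, Finset.mem_univ m, h⟩
  have hOpos : ∀ o m, 0 < (∑ y' : Y, p (o, m, y')) →
      0 < ∑ m' : M, ∑ y' : Y, p (o, m', y') :=
    fun o m h => Finset.sum_pos' (fun m' _ => hOMnn o m') ⟨m, Finset.mem_univ m, h⟩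
  have hMpos : ∀ o m, 0 < (∑ y' : Y, p (o, m, y')) →
      0 < ∑ o' : O, ∑ y' : Y, p (o', m, y') :=
    fun o m h => Finset.sum_pos' (fun o' _ => hOMnn o' m) ⟨o, Finset.mem_univ o, h⟩
  -- total mass as nested sums
  have hp1' : ∑ o : O, ∑ m : M, ∑ y : Y, p (o, m, y) = 1 := by
    rw [← hp1, Fintype.sum_prod_type]
    exact Finset.sum_congr rfl fun o _ =>
      (Fintype.sum_prod_type (fun z : M × Y => p (o, z))).symm
  ------------------------------------------------------------------
  -- Inequality 1 :  I(Y;M|O) ≥ ∑ p log qψ + H(Y|O)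
  ------------------------------------------------------------------
  have h1 :
      (∑ o : O, ∑ m : M, ∑ y : Y,
        if 0 < p (o, m, y) then
          p (o, m, y) *
            Real.log (p (o, m, y) * (∑ m' : M, ∑ y' : Y, p (o, m', y')) /
              ((∑ y' : Y, p (o, m, y')) * (∑ m' : M, p (o, m', y))))
        else 0)
      ≥ (∑ o : O, ∑ m : M, ∑ y : Y,
          if 0 < p (o, m, y) then p (o, m, y) * Real.log (qψ o m y) else 0)
        + (-(∑ o : O, ∑ m : M, ∑ y : Y,
              if 0 < p (o, m, y) then
                p (o, m, y) *
                  Real.log ((∑ m' : M, p (o, m', y)) / (∑ m' : M, ∑ y' : Y, p (o, m', y')))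
              else 0)) := by
    have hsplit :
        (∑ o : O, ∑ m : M, ∑ y : Y,
          if 0 < p (o, m, y) then
            p (o, m, y) *
              Real.log (p (o, m, y) * (∑ m' : M, ∑ y' : Y, p (o, m', y')) /
                ((∑ y' : Y, p (o, m, y')) * (∑ m' : M, p (o, m', y))))
          else 0)
        = (∑ o : O, ∑ m : M, ∑ y : Y,
            if 0 < p (o, m, y) then p (o, m, y) * Real.log (qψ o m y) else 0)
          + (-(∑ o : O, ∑ m : M, ∑ y : Y,
                if 0 < p (o, m, y) then
                  p (o, m, y) *
                    Real.log ((∑ m' : M, p (o, m', y)) / (∑ m' : M, ∑ y' : Y, p (o, m', y')))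
                else 0))
          + (∑ o : O, ∑ m : M, ∑ y : Y,
              if 0 < p (o, m, y) then
                p (o, m, y) * Real.log (p (o, m, y) / ((∑ y' : Y, p (o, m, y')) * qψ o m y))
              else 0) := by
      have step :
          (∑ o : O, ∑ m : M, ∑ y : Y,
            if 0 < p (o, m, y) then
              p (o, m, y) *
                Real.log (p (o, m, y) * (∑ m' : M, ∑ y' : Y, p (o, m', y')) /
                  ((∑ y' : Y, p (o, m, y')) * (∑ m' : M, p (o, m', y))))
            else 0)
          = ∑ o : O, ∑ m : M, ∑ y : Y,
              ((if 0 < p (o, m, y) then p (o, m, y) * Real.log (qψ o m y) else 0)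
                + (-(if 0 < p (o, m, y) then
                      p (o, m, y) *
                        Real.log ((∑ m' : M, p (o, m', y)) /
                          (∑ m' : M, ∑ y' : Y, p (o, m', y')))
                    else 0))
                + (if 0 < p (o, m, y) then
                    p (o, m, y) *
                      Real.log (p (o, m, y) / ((∑ y' : Y, p (o, m, y')) * qψ o m y))
                  else 0)) := by
        refine Finset.sum_congr rfl fun o _ => ?_
        refine Finset.sum_congr rfl fun m _ => ?_
        refine Finset.sum_congr rfl fun y _ => ?_
        by_cases h : 0 < p (o, m, y)
        · simp only [if_pos h]
          have hpne : p (o, m, y) ≠ 0 := ne_of_gt h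
          have hAne : (∑ m' : M, ∑ y' : Y, p (o, m', y')) ≠ 0 :=
            ne_of_gt (hOpos o m (hOMpos o m y h))
          have hBne : (∑ y' : Y, p (o, m, y')) ≠ 0 := ne_of_gt (hOMpos o m y h)
          have hCne : (∑ m' : M, p (o, m', y)) ≠ 0 := ne_of_gt (hOYpos o m y h)
          have hqne : qψ o m y ≠ 0 := ne_of_gt (hqψpos o m y h)
          rw [Real.log_div (mul_ne_zero hpne hAne) (mul_ne_zero hBne hCne),
              Real.log_div hCne hAne,
              Real.log_div hpne (mul_ne_zero hBne hqne),
              Real.log_mul hpne hAne, Real.log_mul hBne hCne, Real.log_mul hBne hqne]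
          ring
        · simp only [if_neg h]; ring
      rw [step]
      simp only [Finset.sum_add_distrib, Finset.sum_neg_distrib]
    rw [hsplit]
    have hS1 : 0 ≤ ∑ o : O, ∑ m : M, ∑ y : Y,
        if 0 < p (o, m, y) then
          p (o, m, y) * Real.log (p (o, m, y) / ((∑ y' : Y, p (o, m, y')) * qψ o m y))
        else 0 := by
      have hg := gibbs_aux (ι := O × M × Y) (fun x => p x)
        (fun x => (∑ y' : Y, p (x.1, x.2.1, y')) * qψ x.1 x.2.1 x.2.2)
        (fun x => hp0 x)
        (fun x => mul_nonneg (hOMnn _ _) (hqψ0 _ _ _))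
        (fun x hx => mul_pos (hOMpos x.1 x.2.1 x.2.2 hx) (hqψpos x.1 x.2.1 x.2.2 hx))
        (by
          have hq : (∑ x : O × M × Y, (∑ y' : Y, p (x.1, x.2.1, y')) * qψ x.1 x.2.1 x.2.2)
              = 1 := by
            rw [Fintype.sum_prod_type]
            have key : ∀ o : O,
                (∑ z : M × Y, (∑ y' : Y, p (o, z.1, y')) * qψ o z.1 z.2)
                = ∑ m : M, ∑ y' : Y, p (o, m, y') := by
              intro o
              rw [Fintype.sum_prod_type]
              refine Finset.sum_congr rfl fun m _ => ?_
              show ∑ y : Y, (∑ y' : Y, p (o, m, y')) * qψ o m y = _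
              rw [← Finset.mul_sum, hqψ1 o m, mul_one]
            rw [Finset.sum_congr rfl fun o _ => key o, hp1']
          rw [hq, hp1])
      calc (0:ℝ) ≤ _ := hg
        _ = _ := by
          rw [Fintype.sum_prod_type]
          exact Finset.sum_congr rfl fun o _ =>
            Fintype.sum_prod_type (fun z : M × Y =>
              if 0 < p (o, z) then
                p (o, z) * Real.log (p (o, z) / ((∑ y' : Y, p (o, z.1, y')) * qψ o z.1 z.2))
              else 0)
    linarith
  ------------------------------------------------------------------
  -- Inequality 2 :  I(O;M) ≤ ∑_o p_O(o) KL(p_{M|o} ‖ qφ)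
  ------------------------------------------------------------------
  have h2 :
      (∑ o : O, ∑ m : M,
          if 0 < (∑ y' : Y, p (o, m, y')) then
            (∑ y' : Y, p (o, m, y')) *
              Real.log ((∑ y' : Y, p (o, m, y')) /
                ((∑ m' : M, ∑ y' : Y, p (o, m', y')) * (∑ o' : O, ∑ y' : Y, p (o', m, y'))))
          else 0)
      ≤ (∑ o : O,
          if 0 < (∑ m' : M, ∑ y' : Y, p (o, m', y')) then
            (∑ m' : M, ∑ y' : Y, p (o, m', y')) *
              (∑ m : M,
                if 0 < (∑ y' : Y, p (o, m, y')) / (∑ m' : M, ∑ y' : Y, p (o, m', y')) then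
                  ((∑ y' : Y, p (o, m, y')) / (∑ m' : M, ∑ y' : Y, p (o, m', y'))) *
                    Real.log (((∑ y' : Y, p (o, m, y')) /
                      (∑ m' : M, ∑ y' : Y, p (o, m', y'))) / qφ m)
                else 0)
          else 0) := by
    have hE :
        (∑ o : O,
          if 0 < (∑ m' : M, ∑ y' : Y, p (o, m', y')) then
            (∑ m' : M, ∑ y' : Y, p (o, m', y')) *
              (∑ m : M,
                if 0 < (∑ y' : Y, p (o, m, y')) / (∑ m' : M, ∑ y' : Y, p (o, m', y')) then
                  ((∑ y' : Y, p (o, m, y')) / (∑ m' : M, ∑ y' : Y, p (o, m', y'))) *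
                    Real.log (((∑ y' : Y, p (o, m, y')) /
                      (∑ m' : M, ∑ y' : Y, p (o, m', y'))) / qφ m)
                else 0)
          else 0)
        = ∑ o : O, ∑ m : M,
            if 0 < (∑ y' : Y, p (o, m, y')) then
              (∑ y' : Y, p (o, m, y')) *
                Real.log ((∑ y' : Y, p (o, m, y')) /
                  ((∑ m' : M, ∑ y' : Y, p (o, m', y')) * qφ m))
            else 0 := by
      refine Finset.sum_congr rfl fun o _ => ?_
      by_cases hO : 0 < ∑ m' : M, ∑ y' : Y, p (o, m', y')
      · rw [if_pos hO, Finset.mul_sum]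
        refine Finset.sum_congr rfl fun m _ => ?_
        have hiff : (0 < (∑ y' : Y, p (o, m, y')) / (∑ m' : M, ∑ y' : Y, p (o, m', y')))
            ↔ (0 < ∑ y' : Y, p (o, m, y')) := by
          constructor
          · intro h
            by_contra hc
            have hz : (∑ y' : Y, p (o, m, y')) = 0 := le_antisymm (not_lt.mp hc) (hOMnn o m)
            rw [hz, zero_div] at h
            exact lt_irrefl 0 h
          · intro h; exact div_pos h hO
        by_cases hOM : 0 < ∑ y' : Y, p (o, m, y')
        · rw [if_pos (hiff.mpr hOM), if_pos hOM, div_div]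
          have hOne : (∑ m' : M, ∑ y' : Y, p (o, m', y')) ≠ 0 := ne_of_gt hO
          field_simp
        · rw [if_neg (fun h => hOM (hiff.mp h)), if_neg hOM, mul_zero]
      · rw [if_neg hO]
        have hO0 : (∑ m' : M, ∑ y' : Y, p (o, m', y')) = 0 :=
          le_antisymm (not_lt.mp hO) (hOnn o)
        refine (Finset.sum_eq_zero fun m _ => ?_).symm
        have hOM0 : (∑ y' : Y, p (o, m, y')) = 0 := by
          have hle : (∑ y' : Y, p (o, m, y')) ≤ ∑ m' : M, ∑ y' : Y, p (o, m', y') :=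
            Finset.single_le_sum (fun m' _ => hOMnn o m') (Finset.mem_univ m)
          exact le_antisymm (hO0 ▸ hle) (hOMnn o m)
        rw [if_neg (by rw [hOM0]; exact lt_irrefl 0)]
    rw [hE]
    have hsplit :
        (∑ o : O, ∑ m : M,
            if 0 < (∑ y' : Y, p (o, m, y')) then
              (∑ y' : Y, p (o, m, y')) *
                Real.log ((∑ y' : Y, p (o, m, y')) /
                  ((∑ m' : M, ∑ y' : Y, p (o, m', y')) * qφ m))
            else 0)
        = (∑ o : O, ∑ m : M,
            if 0 < (∑ y' : Y, p (o, m, y')) then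
              (∑ y' : Y, p (o, m, y')) *
                Real.log ((∑ y' : Y, p (o, m, y')) /
                  ((∑ m' : M, ∑ y' : Y, p (o, m', y')) * (∑ o' : O, ∑ y' : Y, p (o', m, y'))))
            else 0)
          + ∑ o : O, ∑ m : M, (∑ y' : Y, p (o, m, y')) *
              (Real.log (∑ o' : O, ∑ y' : Y, p (o', m, y')) - Real.log (qφ m)) := by
      have step :
          (∑ o : O, ∑ m : M,
              if 0 < (∑ y' : Y, p (o, m, y')) then
                (∑ y' : Y, p (o, m, y')) *
                  Real.log ((∑ y' : Y, p (o, m, y')) /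
                    ((∑ m' : M, ∑ y' : Y, p (o, m', y')) * qφ m))
              else 0)
          = ∑ o : O, ∑ m : M,
              ((if 0 < (∑ y' : Y, p (o, m, y')) then
                  (∑ y' : Y, p (o, m, y')) *
                    Real.log ((∑ y' : Y, p (o, m, y')) /
                      ((∑ m' : M, ∑ y' : Y, p (o, m', y')) *
                        (∑ o' : O, ∑ y' : Y, p (o', m, y'))))
                else 0)
                + (∑ y' : Y, p (o, m, y')) *
                    (Real.log (∑ o' : O, ∑ y' : Y, p (o', m, y')) - Real.log (qφ m))) := by
        refine Finset.sum_congr rfl fun o _ => ?_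
        refine Finset.sum_congr rfl fun m _ => ?_
        by_cases hOM : 0 < ∑ y' : Y, p (o, m, y')
        · rw [if_pos hOM, if_pos hOM]
          have hBne : (∑ y' : Y, p (o, m, y')) ≠ 0 := ne_of_gt hOM
          have hAne : (∑ m' : M, ∑ y' : Y, p (o, m', y')) ≠ 0 := ne_of_gt (hOpos o m hOM)
          have hMne : (∑ o' : O, ∑ y' : Y, p (o', m, y')) ≠ 0 := ne_of_gt (hMpos o m hOM)
          have hqne : qφ m ≠ 0 := ne_of_gt (hqφpos m (hMpos o m hOM))
          rw [Real.log_div hBne (mul_ne_zero hAne hqne),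
              Real.log_div hBne (mul_ne_zero hAne hMne),
              Real.log_mul hAne hqne, Real.log_mul hAne hMne]
          ring
        · rw [if_neg hOM, if_neg hOM]
          have h0 : (∑ y' : Y, p (o, m, y')) = 0 := le_antisymm (not_lt.mp hOM) (hOMnn o m)
          rw [h0, zero_mul, zero_add]
      rw [step]
      simp only [Finset.sum_add_distrib]
    rw [hsplit]
    have hT :
        (∑ o : O, ∑ m : M, (∑ y' : Y, p (o, m, y')) *
            (Real.log (∑ o' : O, ∑ y' : Y, p (o', m, y')) - Real.log (qφ m)))
        = ∑ m : M,
            if 0 < (∑ o' : O, ∑ y' : Y, p (o', m, y')) then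
              (∑ o' : O, ∑ y' : Y, p (o', m, y')) *
                Real.log ((∑ o' : O, ∑ y' : Y, p (o', m, y')) / qφ m)
            else 0 := by
      rw [Finset.sum_comm]
      refine Finset.sum_congr rfl fun m _ => ?_
      rw [← Finset.sum_mul]
      by_cases hM : 0 < ∑ o' : O, ∑ y' : Y, p (o', m, y')
      · have hqne : qφ m ≠ 0 := ne_of_gt (hqφpos m hM)
        rw [if_pos hM, Real.log_div (ne_of_gt hM) hqne]
      · rw [if_neg hM]
        have h0 : (∑ o' : O, ∑ y' : Y, p (o', m, y')) = 0 :=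
          le_antisymm (not_lt.mp hM) (Finset.sum_nonneg fun o' _ => hOMnn o' m)
        rw [h0, zero_mul]
    rw [hT]
    have hS2 : 0 ≤ ∑ m : M,
        if 0 < (∑ o' : O, ∑ y' : Y, p (o', m, y')) then
          (∑ o' : O, ∑ y' : Y, p (o', m, y')) *
            Real.log ((∑ o' : O, ∑ y' : Y, p (o', m, y')) / qφ m)
        else 0 := by
      refine gibbs_aux (fun m => ∑ o' : O, ∑ y' : Y, p (o', m, y')) qφ
        (fun m => Finset.sum_nonneg fun o' _ => hOMnn o' m) hqφ0 hqφpos ?_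
      rw [hqφ1]
      have hswap : (∑ m : M, ∑ o' : O, ∑ y' : Y, p (o', m, y')) = 1 := by
        rw [Finset.sum_comm, hp1']
      rw [hswap]
    linarith
  have h2' := mul_le_mul_of_nonneg_left h2 hβ
  linarith
end

section
/- There do not exist a utility q1 : Fin 3 → ℝ for agent 1 (a single function shared across both states, since agent 1's partial observation is identical in the two states), per-state utilities q2 : Fin 2 → (Fin 3 → ℝ) for agent 2, and per-state mixing functions f : Fin 2 → ℝ → ℝ → ℝ, each monotone nondecreasing in each argument, such that f s (q1 u) (q2 s v) = A_s u v for all s ∈ Fin 2 and all u, v ∈ Fin 3. In other words, the two-state matrix game of the paper's Figure 1 cannot be represented exactly by any monotonic value-function factorization in which agent 1's per-agent utility is shared between the two states. -/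
/-- Payoff matrix of state `s⁽¹⁾` in the paper's Figure 1 two-state matrix game. -/
def A0 : Matrix (Fin 3) (Fin 3) ℝ :=
  !![8, -12, -12; -12, 0, 0; -12, 0, 0]

/-- Payoff matrix of state `s⁽²⁾` in the paper's Figure 1 two-state matrix game. -/
def A1 : Matrix (Fin 3) (Fin 3) ℝ :=
  !![0, 0, -12; 0, 0, -12; -12, -12, 8]

/-- **No monotonic factorization of the two-state game of Figure 1.**
There is no per-agent utility `q1` for agent 1 shared across both states (agent 1's partial
observation is identical in the two states), per-state utilities `q2` for agent 2, and
per-state mixing functions `f s`, each monotone nondecreasing in each argument, representing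
the payoffs exactly. -/
theorem no_monotonic_factorization_figure1 :
    ¬ ∃ (q1 : Fin 3 → ℝ) (q2 : Fin 2 → Fin 3 → ℝ) (f : Fin 2 → ℝ → ℝ → ℝ),
      (∀ s : Fin 2, ∀ x x' y y' : ℝ, x ≤ x' → y ≤ y' → f s x y ≤ f s x' y') ∧
      (∀ s : Fin 2, ∀ u v : Fin 3, f s (q1 u) (q2 s v) = ![A0, A1] s u v) := by
  rintro ⟨q1, q2, f, hmono, h⟩
  have h1 : q1 2 < q1 0 := by
    by_contra hle
    push_neg at hle
    have := hmono 0 (q1 0) (q1 2) (q2 0 0) (q2 0 0) hle le_rfl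
    rw [h 0 0 0, h 0 2 0] at this
    norm_num [A0, Matrix.cons_val_zero, Matrix.cons_val_one, Matrix.cons_val_two, Matrix.head_cons, Matrix.tail_cons, Matrix.vecHead, Matrix.vecTail] at this
  have h2 : q1 0 < q1 2 := by
    by_contra hle
    push_neg at hle
    have := hmono 1 (q1 2) (q1 0) (q2 1 2) (q2 1 2) hle le_rfl
    rw [h 1 2 2, h 1 0 2] at this
    norm_num [A1, Matrix.cons_val_zero, Matrix.cons_val_one, Matrix.cons_val_two, Matrix.head_cons, Matrix.tail_cons, Matrix.vecHead, Matrix.vecTail] at this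
  linarith
end

section
/- There do not exist a utility q1 : Fin 3 → ℝ for agent 1 (a single function shared across both states, since agent 1's partial observation is identical in the two states), per-state utilities q2 : Fin 2 → (Fin 3 → ℝ) for agent 2, and per-state mixing functions f : Fin 2 → ℝ → ℝ → ℝ, each monotone nondecreasing in each argument, such that f s (q1 u) (q2 s v) = B_s u v for all s ∈ Fin 2 and all u, v ∈ Fin 3. In other words, the two-state matrix game of the paper's appendix cannot be represented exactly by any monotonic value-function factorization in which agent 1's per-agent utility is shared between the two states. -/
/-- Payoff matrix of state `s₁` in the paper's appendix two-state matrix game. -/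
def B0 : Matrix (Fin 3) (Fin 3) ℝ :=
  !![4, -2, -2; -2, 0, 0; -2, 0, 0]

/-- Payoff matrix of state `s₂` in the paper's appendix two-state matrix game. -/
def B1 : Matrix (Fin 3) (Fin 3) ℝ :=
  !![-2, 0, 0; 4, -2, -2; -2, 0, 0]

/-- **No monotonic factorization of the appendix two-state game.**
There is no per-agent utility `q1` for agent 1 shared across both states (agent 1's partial
observation is identical in the two states), per-state utilities `q2` for agent 2, and
per-state mixing functions `f s`, each monotone nondecreasing in each argument, representing
the payoffs exactly. -/
theorem no_monotonic_factorization_appendix :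
    ¬ ∃ (q1 : Fin 3 → ℝ) (q2 : Fin 2 → Fin 3 → ℝ) (f : Fin 2 → ℝ → ℝ → ℝ),
      (∀ s : Fin 2, ∀ x x' y y' : ℝ, x ≤ x' → y ≤ y' → f s x y ≤ f s x' y') ∧
      (∀ s : Fin 2, ∀ u v : Fin 3, f s (q1 u) (q2 s v) = ![B0, B1] s u v) := by
  rintro ⟨q1, q2, f, hmono, heq⟩
  have h0 : ¬ q1 0 ≤ q1 1 := by
    intro h
    have := hmono 0 (q1 0) (q1 1) (q2 0 0) (q2 0 0) h le_rfl
    rw [heq 0 0 0, heq 0 1 0] at this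
    simp [B0, B1] at this
    norm_num at this
  have h1 : ¬ q1 1 ≤ q1 0 := by
    intro h
    have := hmono 1 (q1 1) (q1 0) (q2 1 0) (q2 1 0) h le_rfl
    rw [heq 1 1 0, heq 1 0 0] at this
    simp [B0, B1] at this
    norm_num at this
  exact h0 (le_of_not_ge h1)
end

section
/- With the definitions below, the following identity holds: ∑_{i ∈ Fin n} k i · ( ∑_{a ∈ U i} π i a · ( q i a − (α / k i) · log(π i a) ) ) + b = ∑_{a ∈ Π_{i} U i} π(a) · Q_tot(a) − α · ∑_{a ∈ Π_{i} U i} π(a) · log(π(a)). That is, feeding the entropy-regularized local utilities q_i − α_i · log π_i with per-agent temperatures α_i = α / k_i into a one-layer linear mixing network with positive weights k_i and bias b yields exactly the soft (maximum-entropy) joint objective E_π[Q_tot] − α · E_π[log π] of factorized soft policy iteration. -/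
/-!
The joint policy is a product of the agents' policies. Under a product weight the expectation
of a sum of single-coordinate functions splits into the per-agent expectations, and
`log ∏ i, π i = ∑ i, log π i` makes the joint entropy the sum of the agents' entropies. Scaling
agent `i`'s regularized utility by `k i` turns its temperature `α / k i` back into `α`, so both
sides are the same sum of per-agent terms.
-/

open Finset

section ProductWeights

variable {ι : Type*} [Fintype ι] [DecidableEq ι] {U : ι → Type*} [∀ i, Fintype (U i)]
  {R : Type*} [CommSemiring R]

theorem Fintype.sum_prod_eq_one {p : ∀ i, U i → R} (hp : ∀ i, ∑ x, p i x = 1) :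
    ∑ a : ∀ i, U i, ∏ i, p i (a i) = 1 := by
  rw [← Fintype.prod_sum]
  simp [hp]

theorem Fintype.sum_prod_mul_apply_eq {p : ∀ i, U i → R} (hp : ∀ i, ∑ x, p i x = 1)
    (j : ι) (f : U j → R) :
    ∑ a : ∀ i, U i, (∏ i, p i (a i)) * f (a j) = ∑ x, p j x * f x := by
  let g : ∀ i, U i → R := fun i x => if h : i = j then p i x * f (h ▸ x) else p i x
  have hg : ∀ a : ∀ i, U i, (∏ i, p i (a i)) * f (a j) = ∏ i, g i (a i) := by
    intro a
    rw [← mul_prod_erase univ (fun i => p i (a i)) (mem_univ j),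
      ← mul_prod_erase univ (fun i => g i (a i)) (mem_univ j),
      Finset.prod_congr rfl fun i hi => (dif_neg (ne_of_mem_erase hi) : g i (a i) = p i (a i))]
    simp only [g, dif_pos rfl]
    ring
  simp_rw [hg, ← Fintype.prod_sum]
  rw [← mul_prod_erase univ (fun i => ∑ x, g i x) (mem_univ j),
    Finset.prod_eq_one fun i hi => ?_, mul_one]
  · simp only [g, dif_pos rfl]
  · simp only [g, dif_neg (ne_of_mem_erase hi), hp]

theorem Fintype.sum_prod_mul_sum_eq {p : ∀ i, U i → R} (hp : ∀ i, ∑ x, p i x = 1)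
    (f : ∀ i, U i → R) :
    ∑ a : ∀ i, U i, (∏ i, p i (a i)) * ∑ i, f i (a i) = ∑ i, ∑ x, p i x * f i x := by
  simp_rw [mul_sum]
  rw [sum_comm]
  exact Finset.sum_congr rfl fun j _ => Fintype.sum_prod_mul_apply_eq hp j (f j)

end ProductWeights

theorem Real.prod_mul_log_prod {ι : Type*} (s : Finset ι) (x : ι → ℝ) :
    (∏ i ∈ s, x i) * Real.log (∏ i ∈ s, x i) = (∏ i ∈ s, x i) * ∑ i ∈ s, Real.log (x i) := by
  by_cases h : ∏ i ∈ s, x i = 0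
  · simp [h]
  · rw [Real.log_prod (prod_ne_zero_iff.mp h)]

theorem factorized_soft_policy_iteration_identity_general
    {n : ℕ} (U : Fin n → Type*) [∀ i, Fintype (U i)]
    (pol : ∀ i, U i → ℝ) (q : ∀ i, U i → ℝ) (k : Fin n → ℝ) (b α : ℝ)
    (hpol_sum : ∀ i, ∑ a : U i, pol i a = 1)
    (hk : ∀ i, 0 < k i) :
    (∑ i : Fin n, k i *
        (∑ a : U i, pol i a * (q i a - (α / k i) * Real.log (pol i a)))) + b
      = (∑ a : (∀ i, U i), (∏ i : Fin n, pol i (a i)) *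
            ((∑ i : Fin n, k i * q i (a i)) + b))
        - α * ∑ a : (∀ i, U i),
            (∏ i : Fin n, pol i (a i)) * Real.log (∏ i : Fin n, pol i (a i)) := by
  have hlocal : ∀ i, k i * ∑ a : U i, pol i a * (q i a - (α / k i) * Real.log (pol i a))
      = ∑ a : U i, pol i a * (k i * q i a - α * Real.log (pol i a)) := by
    intro i
    rw [mul_sum]
    refine sum_congr rfl fun a _ => ?_
    field_simp [(hk i).ne']
  calc (∑ i : Fin n, k i *
          (∑ a : U i, pol i a * (q i a - (α / k i) * Real.log (pol i a)))) + b
      = (∑ a : (∀ i, U i), (∏ i, pol i (a i)) *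
          ∑ i, (k i * q i (a i) - α * Real.log (pol i (a i)))) + b := by
        rw [Fintype.sum_prod_mul_sum_eq hpol_sum fun i x => k i * q i x - α * Real.log (pol i x)]
        exact congrArg (· + b) (sum_congr rfl fun i _ => hlocal i)
    _ = _ := by
        simp_rw [Real.prod_mul_log_prod, mul_add, sum_add_distrib, ← sum_mul,
          Fintype.sum_prod_eq_one hpol_sum, one_mul, sum_sub_distrib, mul_sub, sum_sub_distrib,
          mul_sum, mul_left_comm α]
        ring

/-- **Factorized soft policy iteration identity.**
Feeding the entropy-regularized local utilities `q i − (α / k i) · log (pol i)` (per-agent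
temperature `α i = α / k i`) into a one-layer linear mixing network with positive weights
`k i` and bias `b` yields exactly the soft (maximum-entropy) joint objective
`E_π[Q_tot] − α · E_π[log π]`, where the joint policy is `π(a) = ∏ i, pol i (a i)` and the
joint action value is `Q_tot(a) = ∑ i, k i * q i (a i) + b`. -/
theorem factorized_soft_policy_iteration_identity
    {n : ℕ} (U : Fin n → Type*) [∀ i, Fintype (U i)] [∀ i, Nonempty (U i)]
    (pol : ∀ i, U i → ℝ) (q : ∀ i, U i → ℝ) (k : Fin n → ℝ) (b α : ℝ)
    (hpol_pos : ∀ i a, 0 < pol i a)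
    (hpol_sum : ∀ i, ∑ a : U i, pol i a = 1)
    (hk : ∀ i, 0 < k i) :
    (∑ i : Fin n, k i *
        (∑ a : U i, pol i a * (q i a - (α / k i) * Real.log (pol i a)))) + b
      = (∑ a : (∀ i, U i), (∏ i : Fin n, pol i (a i)) *
            ((∑ i : Fin n, k i * q i (a i)) + b))
        - α * ∑ a : (∀ i, U i),
            (∏ i : Fin n, pol i (a i)) * Real.log (∏ i : Fin n, pol i (a i)) :=
  factorized_soft_policy_iteration_identity_general U pol q k b α hpol_sum hk
end
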